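/- arXiv:1103.2897 — 8 statements merged into one kernel-verified Lean document; each statement's English description precedes it below -/
import Mathlib

section
/- Let A be a real k×n matrix, b ∈ ℝ^k and λ > 0. A vector x* ∈ ℝ^n is a minimizer of the function x ↦ (1/2)‖Ax − b‖₂² + λ‖x‖₁ over ℝ^n if and only if −Aᵀ(Ax* − b) ∈ λ·Sign(x*), i.e. for every index i: if x*_i > 0 then (−Aᵀ(Ax* − b))_i = λ, if x*_i < 0 then (−Aᵀ(Ax* − b))_i = −λ, and if x*_i = 0 then |(−Aᵀ(Ax* − b))_i| ≤ λ. -/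
open Matrix Finset

/-- The Euclidean (2-)norm of a vector in `ℝ^m`. -/
noncomputable def l2norm {m : ℕ} (v : Fin m → ℝ) : ℝ := Real.sqrt (∑ i, (v i) ^ 2)

/-- The 1-norm of a vector in `ℝ^m`. -/
def l1norm {m : ℕ} (v : Fin m → ℝ) : ℝ := ∑ i, |v i|

/-- The objective function of the problem (QP_λ): `x ↦ (1/2)‖Ax − b‖₂² + λ‖x‖₁`. -/
noncomputable def qpObj {k n : ℕ} (A : Matrix (Fin k) (Fin n) ℝ) (b : Fin k → ℝ)
    (lam : ℝ) (x : Fin n → ℝ) : ℝ :=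
  (1 / 2) * (l2norm (A.mulVec x - b)) ^ 2 + lam * l1norm x

lemma l2norm_sq {m : ℕ} (v : Fin m → ℝ) : (l2norm v) ^ 2 = ∑ i, (v i) ^ 2 := by
  rw [l2norm, Real.sq_sqrt]
  positivity

lemma aux_nonpos {c d δ : ℝ} (hc : 0 ≤ c) (hδ : 0 < δ)
    (h : ∀ s : ℝ, 0 < s → s < δ → d ≤ s * c) : d ≤ 0 := by
  by_contra hd
  push_neg at hd
  have hs : 0 < min (δ/2) (d/(2*(c+1))) := by positivity
  have h1 := h _ hs (lt_of_le_of_lt (min_le_left _ _) (by linarith))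
  have h2 : min (δ/2) (d/(2*(c+1))) ≤ d/(2*(c+1)) := min_le_right _ _
  have h3 : min (δ/2) (d/(2*(c+1))) * c ≤ d/(2*(c+1)) * c :=
    mul_le_mul_of_nonneg_right h2 hc
  have h4 : d/(2*(c+1)) * (2*(c+1)) = d := div_mul_cancel₀ _ (by positivity)
  nlinarith

lemma quad_expand {k n : ℕ} (A : Matrix (Fin k) (Fin n) ℝ) (b : Fin k → ℝ)
    (xs x : Fin n → ℝ) :
    (l2norm (A.mulVec x - b))^2 = (l2norm (A.mulVec xs - b))^2
      + 2 * (∑ i, (Aᵀ.mulVec (A.mulVec xs - b)) i * (x i - xs i))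
      + ∑ j, ((A.mulVec (x - xs)) j)^2 := by
  have hx : ∀ j, (A.mulVec x - b) j = (A.mulVec xs - b) j + (A.mulVec (x - xs)) j := by
    intro j
    simp [Matrix.mulVec_sub]
  have key : ∑ j, (A.mulVec xs - b) j * (A.mulVec (x - xs)) j
      = ∑ i, (Aᵀ.mulVec (A.mulVec xs - b)) i * (x i - xs i) := by
    simp only [Matrix.mulVec, dotProduct, Matrix.transpose_apply, Pi.sub_apply,
      Finset.mul_sum, Finset.sum_mul]
    rw [Finset.sum_comm]
    apply Finset.sum_congr rfl
    intro i _
    apply Finset.sum_congr rfl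
    intro j _
    ring
  rw [l2norm_sq, l2norm_sq, ← key]
  have : ∀ j ∈ Finset.univ, ((A.mulVec x - b) j)^2
      = ((A.mulVec xs - b) j)^2 + (2 * ((A.mulVec xs - b) j * (A.mulVec (x - xs)) j)
        + ((A.mulVec (x - xs)) j)^2) := by
    intro j _
    rw [hx j]; ring
  rw [Finset.sum_congr rfl this, Finset.sum_add_distrib, Finset.sum_add_distrib,
    ← Finset.mul_sum]
  ring

lemma obj_expand {k n : ℕ} (A : Matrix (Fin k) (Fin n) ℝ) (b : Fin k → ℝ) (lam : ℝ)
    (xs x : Fin n → ℝ) :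
    qpObj A b lam x = qpObj A b lam xs
      + (∑ i, (Aᵀ.mulVec (A.mulVec xs - b)) i * (x i - xs i))
      + (1/2) * ∑ j, ((A.mulVec (x - xs)) j)^2
      + lam * (l1norm x - l1norm xs) := by
  simp only [qpObj]
  rw [quad_expand A b xs x]
  ring

/-- `x*` minimizes the (QP_λ) objective iff
`−Aᵀ(Ax* − b) ∈ λ·Sign(x*)`. -/
theorem qp_minimizer_iff_optimality_condition {k n : ℕ}
    (A : Matrix (Fin k) (Fin n) ℝ) (b : Fin k → ℝ) (lam : ℝ) (hlam : 0 < lam)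
    (xs : Fin n → ℝ) :
    (∀ x : Fin n → ℝ, qpObj A b lam xs ≤ qpObj A b lam x) ↔
      (∀ i : Fin n,
        (0 < xs i → (-(Aᵀ.mulVec (A.mulVec xs - b))) i = lam) ∧
        (xs i < 0 → (-(Aᵀ.mulVec (A.mulVec xs - b))) i = -lam) ∧
        (xs i = 0 → |(-(Aᵀ.mulVec (A.mulVec xs - b))) i| ≤ lam)) := by
  classical
  set v : Fin n → ℝ := Aᵀ.mulVec (A.mulVec xs - b) with hv
  constructor
  · intro hmin i
    set c : ℝ := ∑ j, (A j i)^2 with hc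
    have hc0 : 0 ≤ c := by positivity
    -- key inequality for coordinate perturbations
    have hineq : ∀ t : ℝ, 0 ≤ v i * t + (1/2) * (t^2 * c)
        + lam * (|xs i + t| - |xs i|) := by
      intro t
      have h := hmin (Function.update xs i (xs i + t))
      rw [obj_expand A b lam xs (Function.update xs i (xs i + t))] at h
      have hdiff : ∀ i', Function.update xs i (xs i + t) i' - xs i'
          = if i' = i then t else 0 := by
        intro i'
        by_cases hii : i' = i
        · subst hii; simp
        · simp [Function.update_of_ne hii, hii]
      have h1 : (∑ i', v i' * (Function.update xs i (xs i + t) i' - xs i')) = v i * t := by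
        rw [Finset.sum_eq_single i]
        · rw [hdiff i]; simp
        · intro i' _ hne; rw [hdiff i']; simp [hne]
        · simp
      have h2 : ∀ j, (A.mulVec (Function.update xs i (xs i + t) - xs)) j = A j i * t := by
        intro j
        simp only [Matrix.mulVec, dotProduct, Pi.sub_apply]
        rw [Finset.sum_eq_single i]
        · rw [hdiff i]; simp
        · intro i' _ hne; rw [hdiff i']; simp [hne]
        · simp
      have h3 : (∑ j, ((A.mulVec (Function.update xs i (xs i + t) - xs)) j)^2)
          = t^2 * c := by
        rw [hc, Finset.mul_sum]
        apply Finset.sum_congr rfl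
        intro j _
        rw [h2 j]; ring
      have h4 : l1norm (Function.update xs i (xs i + t)) - l1norm xs
          = |xs i + t| - |xs i| := by
        simp only [l1norm]
        rw [← Finset.sum_sub_distrib, Finset.sum_eq_single i]
        · simp
        · intro i' _ hne; simp [Function.update_of_ne hne]
        · simp
      rw [h1, h3, h4] at h
      linarith
    refine ⟨?_, ?_, ?_⟩
    · -- xs i > 0
      intro hpos
      have hup : v i + lam ≤ 0 := by
        apply aux_nonpos (c := c/2) (δ := xs i) (by linarith) hpos
        intro s hs hsδ
        have h := hineq (-s)
        have habs : |xs i + -s| = xs i - s := by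
          rw [abs_of_pos]; ring; linarith
        rw [habs, abs_of_pos hpos] at h
        nlinarith
      have hdown : -(v i + lam) ≤ 0 := by
        apply aux_nonpos (c := c/2) (δ := 1) (by linarith) one_pos
        intro s hs _
        have h := hineq s
        have habs : |xs i + s| = xs i + s := by
          rw [abs_of_pos]; linarith
        rw [habs, abs_of_pos hpos] at h
        nlinarith
      simp only [Pi.neg_apply]
      linarith
    · -- xs i < 0
      intro hneg
      have hup : lam - v i ≤ 0 := by
        apply aux_nonpos (c := c/2) (δ := -(xs i)) (by linarith) (by linarith)
        intro s hs hsδ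
        have h := hineq s
        have habs : |xs i + s| = -(xs i) - s := by
          rw [abs_of_neg]; ring; linarith
        rw [habs, abs_of_neg hneg] at h
        nlinarith
      have hdown : v i - lam ≤ 0 := by
        apply aux_nonpos (c := c/2) (δ := 1) (by linarith) one_pos
        intro s hs _
        have h := hineq (-s)
        have habs : |xs i + -s| = -(xs i) + s := by
          rw [abs_of_neg]; ring; linarith
        rw [habs, abs_of_neg hneg] at h
        nlinarith
      simp only [Pi.neg_apply]
      linarith
    · -- xs i = 0
      intro hzero
      have hup : v i - lam ≤ 0 := by
        apply aux_nonpos (c := c/2) (δ := 1) (by linarith) one_pos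
        intro s hs _
        have h := hineq (-s)
        rw [hzero] at h
        have habs : |(0:ℝ) + -s| = s := by
          rw [abs_of_nonpos] <;> [skip; linarith]; ring
        rw [habs] at h
        simp only [abs_zero] at h
        nlinarith
      have hdown : -(v i) - lam ≤ 0 := by
        apply aux_nonpos (c := c/2) (δ := 1) (by linarith) one_pos
        intro s hs _
        have h := hineq s
        rw [hzero] at h
        have habs : |(0:ℝ) + s| = s := by
          rw [abs_of_nonneg] <;> linarith
        rw [habs] at h
        simp only [abs_zero] at h
        nlinarith
      simp only [Pi.neg_apply]
      rw [abs_le]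
      constructor <;> linarith
  · intro hopt x
    rw [obj_expand A b lam xs x]
    have hsq : 0 ≤ (1/2) * ∑ j, ((A.mulVec (x - xs)) j)^2 := by positivity
    have hterm : 0 ≤ (∑ i, v i * (x i - xs i)) + lam * (l1norm x - l1norm xs) := by
      simp only [l1norm]
      rw [← Finset.sum_sub_distrib, Finset.mul_sum, ← Finset.sum_add_distrib]
      apply Finset.sum_nonneg
      intro i _
      obtain ⟨hp, hn, hz⟩ := hopt i
      simp only [Pi.neg_apply] at hp hn hz
      rcases lt_trichotomy (xs i) 0 with h | h | h
      · have hvi : v i = lam := by have := hn h; linarith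
        rw [hvi, abs_of_neg h]
        have := abs_nonneg (x i)
        have := neg_abs_le (x i)
        nlinarith
      · have hvi := hz h
        rw [h]
        simp only [abs_zero, sub_zero]
        rw [abs_le] at hvi
        have := abs_nonneg (x i)
        have h1 := neg_abs_le (x i)
        have h2 := le_abs_self (x i)
        nlinarith [hvi.1, hvi.2]
      · have hvi : v i = -lam := by have := hp h; linarith
        rw [hvi, abs_of_pos h]
        have := abs_nonneg (x i)
        have := le_abs_self (x i)
        nlinarith
    linarith
end

section
/- Let A be a real k×n matrix, λ > 0 and x* ∈ ℝ^n, and suppose w ∈ ℝ^n lies in the range of Aᵀ and satisfies w ∈ Sign(x*). If y ∈ ℝ^k is a solution of Aᵀy = w and b is defined by b = λy + Ax*, then x* is a minimizer of the function x ↦ (1/2)‖Ax − b‖₂² + λ‖x‖₁ over ℝ^n. -/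
open Matrix Finset

/-- `w ∈ Sign(x)`: the multivalued sign. -/
def inSign {n : ℕ} (w x : Fin n → ℝ) : Prop :=
  ∀ i, (0 < x i → w i = 1) ∧ (x i < 0 → w i = -1) ∧ (x i = 0 → |w i| ≤ 1)

/-- if `w ∈ rg Aᵀ ∩ Sign(x*)`, `Aᵀy = w` and `b = λy + Ax*`,
then `x*` minimizes the (QP_λ) objective. -/
theorem source_condition_gives_minimizer {k n : ℕ}
    (A : Matrix (Fin k) (Fin n) ℝ) (lam : ℝ) (hlam : 0 < lam)
    (xs w : Fin n → ℝ)
    (hw_range : ∃ u : Fin k → ℝ, Aᵀ.mulVec u = w)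
    (hw_sign : inSign w xs)
    (y : Fin k → ℝ) (hy : Aᵀ.mulVec y = w)
    (b : Fin k → ℝ) (hb : b = lam • y + A.mulVec xs) :
    ∀ x : Fin n → ℝ, qpObj A b lam xs ≤ qpObj A b lam x := by
  intro x
  have hw1 : ∀ i, |w i| ≤ 1 := by
    intro i
    rcases lt_trichotomy (xs i) 0 with h|h|h
    · rw [(hw_sign i).2.1 h]; simp
    · exact (hw_sign i).2.2 h
    · rw [(hw_sign i).1 h]; simp
  have hxsw : ∀ i, xs i * w i = |xs i| := by
    intro i
    rcases lt_trichotomy (xs i) 0 with h|h|h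
    · rw [(hw_sign i).2.1 h, abs_of_neg h]; ring
    · simp [h]
    · rw [(hw_sign i).1 h, abs_of_pos h]; ring
  have hxw : ∀ i, x i * w i ≤ |x i| := by
    intro i
    calc x i * w i ≤ |x i * w i| := le_abs_self _
      _ = |x i| * |w i| := abs_mul _ _
      _ ≤ |x i| * 1 := mul_le_mul_of_nonneg_left (hw1 i) (abs_nonneg _)
      _ = |x i| := mul_one _
  have hsq : ∀ v : Fin k → ℝ, (l2norm v) ^ 2 = ∑ i, (v i) ^ 2 := fun v =>
    Real.sq_sqrt (Finset.sum_nonneg fun i _ => sq_nonneg _)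
  set u := A.mulVec (x - xs) with hu
  have hAx : A.mulVec x - b = u - lam • y := by
    rw [hb, hu, Matrix.mulVec_sub]; abel
  have hAxs : A.mulVec xs - b = -(lam • y) := by
    rw [hb]; abel
  have hdot : ∑ i, u i * y i = ∑ j, (x j - xs j) * w j := by
    have : u ⬝ᵥ y = (x - xs) ⬝ᵥ w := by
      rw [hu, ← hy, Matrix.mulVec_transpose, dotProduct_comm,
        Matrix.dotProduct_mulVec, dotProduct_comm]
    simpa [dotProduct, Pi.sub_apply] using this
  have key : qpObj A b lam x - qpObj A b lam xs
      = (1 / 2) * (∑ i, (u i) ^ 2) + lam * ∑ i, (|x i| - x i * w i) := by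
    unfold qpObj l1norm
    rw [hsq, hsq, hAx, hAxs]
    have e1 : ∑ i, ((u - lam • y) i) ^ 2 - ∑ i, ((-(lam • y)) i) ^ 2
        = ∑ i, (u i) ^ 2 - 2 * lam * ∑ i, u i * y i := by
      rw [← Finset.sum_sub_distrib, Finset.mul_sum, ← Finset.sum_sub_distrib]
      apply Finset.sum_congr rfl
      intro i _
      simp only [Pi.sub_apply, Pi.smul_apply, Pi.neg_apply, smul_eq_mul]
      ring
    have e2 : ∑ i, (|x i| - x i * w i)
        = (∑ i, |x i| - ∑ i, |xs i|) - ∑ j, (x j - xs j) * w j := by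
      have hs : ∑ j, xs j * w j = ∑ j, |xs j| := Finset.sum_congr rfl fun j _ => hxsw j
      rw [Finset.sum_sub_distrib]
      simp only [sub_mul]
      rw [Finset.sum_sub_distrib, hs]
      ring
    rw [e2, ← hdot]
    nlinarith [e1]
  have h1 : (0:ℝ) ≤ (1 / 2) * (∑ i, (u i) ^ 2) := by
    have := Finset.sum_nonneg (fun i (_ : i ∈ Finset.univ) => sq_nonneg (u i))
    linarith
  have h2 : (0:ℝ) ≤ lam * ∑ i, (|x i| - x i * w i) := by
    apply mul_nonneg hlam.le
    exact Finset.sum_nonneg fun i _ => by linarith [hxw i]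
  linarith [key]
end

section
/- Let A be a real k×n matrix and let the index set {1,…,n} be partitioned into sets I, A₊ and A₋. Let x* ∈ ℝ^n satisfy x*_i > 0 for i ∈ A₊, x*_i < 0 for i ∈ A₋, and x*_i = 0 for i ∈ I, and let λ > 0. Suppose y ∈ ℝ^k satisfies (Aᵀy)_i = 1 for i ∈ A₊, (Aᵀy)_i = −1 for i ∈ A₋, and |(Aᵀy)_i| ≤ 1 for i ∈ I. Define b = λy + Ax*. Then x* is a minimizer of the function x ↦ (1/2)‖Ax − b‖₂² + λ‖x‖₁ over ℝ^n. -/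
open Matrix Finset

/-- construction of a right-hand side `b = λy + Ax*` from a
sign pattern (partition `I`, `A₊`, `A₋`), a compliant `x*` and a vector `y`
satisfying the dual certificate conditions, yields an instance with
known minimizer `x*`. -/
theorem construct_b_gives_minimizer {k n : ℕ}
    (A : Matrix (Fin k) (Fin n) ℝ)
    (I Ap Am : Set (Fin n))
    (hIAp : Disjoint I Ap) (hIAm : Disjoint I Am) (hApAm : Disjoint Ap Am)
    (hcover : I ∪ Ap ∪ Am = Set.univ)
    (xs : Fin n → ℝ)
    (hxp : ∀ i ∈ Ap, 0 < xs i) (hxm : ∀ i ∈ Am, xs i < 0)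
    (hxI : ∀ i ∈ I, xs i = 0)
    (lam : ℝ) (hlam : 0 < lam)
    (y : Fin k → ℝ)
    (hyp : ∀ i ∈ Ap, Aᵀ.mulVec y i = 1)
    (hym : ∀ i ∈ Am, Aᵀ.mulVec y i = -1)
    (hyI : ∀ i ∈ I, |Aᵀ.mulVec y i| ≤ 1)
    (b : Fin k → ℝ) (hb : b = lam • y + A.mulVec xs) :
    ∀ x : Fin n → ℝ, qpObj A b lam xs ≤ qpObj A b lam x := by
  intro x
  have hsq : ∀ (v : Fin k → ℝ), (l2norm v) ^ 2 = ∑ j, v j ^ 2 := fun v =>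
    Real.sq_sqrt (Finset.sum_nonneg fun j _ => sq_nonneg _)
  set g : Fin n → ℝ := Aᵀ.mulVec y with hg
  -- pointwise subgradient inequality
  have hcase : ∀ i : Fin n, (x i - xs i) * g i ≤ |x i| - |xs i| := by
    intro i
    have hi : i ∈ I ∪ Ap ∪ Am := hcover ▸ Set.mem_univ i
    rcases hi with (hi | hi) | hi
    · have h1 : xs i = 0 := hxI i hi
      have h2 : |g i| ≤ 1 := hyI i hi
      have h3 := abs_mul (x i) (g i)
      have h4 := le_abs_self (x i * g i)
      have h5 := abs_nonneg (x i)
      rw [h1]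
      simp only [abs_zero, sub_zero]
      nlinarith [mul_le_mul_of_nonneg_left h2 h5]
    · have h1 := hxp i hi
      have h2 : g i = 1 := hyp i hi
      rw [h2, abs_of_pos h1]
      nlinarith [le_abs_self (x i)]
    · have h1 := hxm i hi
      have h2 : g i = -1 := hym i hi
      rw [h2, abs_of_neg h1]
      nlinarith [neg_abs_le (x i)]
  have hsum : ∑ i, (x i - xs i) * g i ≤ ∑ i, (|x i| - |xs i|) :=
    Finset.sum_le_sum fun i _ => hcase i
  -- residuals
  have hres : A.mulVec x - b = A.mulVec (x - xs) - lam • y := by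
    rw [hb, Matrix.mulVec_sub]
    ext j; simp; ring
  have hres0 : A.mulVec xs - b = -(lam • y) := by
    rw [hb]; ext j; simp
  -- adjoint identity
  have hadj : ∑ j, (A.mulVec (x - xs) j * y j) = ∑ i, (x i - xs i) * g i := by
    have h := Matrix.dotProduct_mulVec y A (x - xs)
    have h2 : g = A.vecMul y := Matrix.mulVec_transpose A y
    simp only [dotProduct, h2] at h ⊢
    calc ∑ j, A.mulVec (x - xs) j * y j = ∑ j, y j * A.mulVec (x - xs) j := by
          exact Finset.sum_congr rfl fun j _ => mul_comm _ _
      _ = ∑ i, A.vecMul y i * (x - xs) i := h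
      _ = ∑ i, (x i - xs i) * A.vecMul y i := by
          exact Finset.sum_congr rfl fun i _ => by simp [mul_comm]
  -- expand objective
  unfold qpObj l1norm
  rw [hsq, hsq, hres, hres0]
  have hexp : ∑ j, (A.mulVec (x - xs) - lam • y) j ^ 2
      = ∑ j, (A.mulVec (x - xs) j) ^ 2
        - 2 * lam * ∑ j, (A.mulVec (x - xs) j * y j)
        + lam ^ 2 * ∑ j, (y j) ^ 2 := by
    rw [Finset.mul_sum, Finset.mul_sum, ← Finset.sum_sub_distrib, ← Finset.sum_add_distrib]
    exact Finset.sum_congr rfl fun j _ => by simp [Pi.sub_apply, Pi.smul_apply, smul_eq_mul]; ring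
  have hexp0 : ∑ j, (-(lam • y)) j ^ 2 = lam ^ 2 * ∑ j, (y j) ^ 2 := by
    rw [Finset.mul_sum]
    exact Finset.sum_congr rfl fun j _ => by simp [Pi.smul_apply, smul_eq_mul]; ring
  rw [hexp, hexp0, hadj]
  have hnn : (0:ℝ) ≤ ∑ j, (A.mulVec (x - xs) j) ^ 2 :=
    Finset.sum_nonneg fun j _ => sq_nonneg _
  have hsum2 : ∑ i, (|x i| - |xs i|) = (∑ i, |x i|) - ∑ i, |xs i| :=
    Finset.sum_sub_distrib _ _
  rw [hsum2] at hsum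
  nlinarith [mul_le_mul_of_nonneg_left hsum (le_of_lt hlam)]
end

section
/- Let A be a real k×n matrix, b ∈ ℝ^k and λ > 0, and let x_QP ∈ ℝ^n be a minimizer of x ↦ (1/2)‖Ax − b‖₂² + λ‖x‖₁. Set σ = ‖A x_QP − b‖₂. Then x_QP solves the constrained problem (BP_σ): for every x ∈ ℝ^n with ‖Ax − b‖₂ ≤ σ one has ‖x_QP‖₁ ≤ ‖x‖₁ (and x_QP itself satisfies the constraint ‖A x_QP − b‖₂ ≤ σ). -/
open Matrix Finset

/-- a minimizer `x_QP` of (QP_λ) solves (BP_σ) with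
`σ = ‖A x_QP − b‖₂`. -/
theorem qp_solves_bp {k n : ℕ}
    (A : Matrix (Fin k) (Fin n) ℝ) (b : Fin k → ℝ) (lam : ℝ) (hlam : 0 < lam)
    (xQP : Fin n → ℝ)
    (hmin : ∀ x : Fin n → ℝ, qpObj A b lam xQP ≤ qpObj A b lam x)
    (σ : ℝ) (hσ : σ = l2norm (A.mulVec xQP - b)) :
    l2norm (A.mulVec xQP - b) ≤ σ ∧
      ∀ x : Fin n → ℝ, l2norm (A.mulVec x - b) ≤ σ → l1norm xQP ≤ l1norm x := by
  have hnn : ∀ (m : ℕ) (v : Fin m → ℝ), 0 ≤ l2norm v := fun m v => Real.sqrt_nonneg _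
  refine ⟨hσ.ge, fun x hx => ?_⟩
  have h1 := hmin x
  unfold qpObj at h1
  have hsq : (l2norm (A.mulVec x - b)) ^ 2 ≤ σ ^ 2 :=
    pow_le_pow_left₀ (hnn _ _) hx 2
  rw [← hσ] at h1
  nlinarith [h1, hsq, hlam]
end

section
/- Let A be a real k×n matrix, b ∈ ℝ^k and λ > 0, and let x_QP ∈ ℝ^n be a minimizer of x ↦ (1/2)‖Ax − b‖₂² + λ‖x‖₁. Set τ = ‖x_QP‖₁. Then x_QP solves the problem (LS_τ): for every x ∈ ℝ^n with ‖x‖₁ ≤ τ one has ‖A x_QP − b‖₂ ≤ ‖Ax − b‖₂ (and x_QP itself satisfies the constraint ‖x_QP‖₁ ≤ τ). -/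
open Matrix Finset

/-- a minimizer `x_QP` of (QP_λ) solves (LS_τ) with
`τ = ‖x_QP‖₁`. -/
theorem qp_solves_lasso {k n : ℕ}
    (A : Matrix (Fin k) (Fin n) ℝ) (b : Fin k → ℝ) (lam : ℝ) (hlam : 0 < lam)
    (xQP : Fin n → ℝ)
    (hmin : ∀ x : Fin n → ℝ, qpObj A b lam xQP ≤ qpObj A b lam x)
    (τ : ℝ) (hτ : τ = l1norm xQP) :
    l1norm xQP ≤ τ ∧
      ∀ x : Fin n → ℝ, l1norm x ≤ τ →
        l2norm (A.mulVec xQP - b) ≤ l2norm (A.mulVec x - b) := by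
  refine ⟨le_of_eq hτ.symm, fun x hx => ?_⟩
  have h := hmin x
  unfold qpObj at h
  have hsq : (l2norm (A.mulVec xQP - b)) ^ 2 ≤ (l2norm (A.mulVec x - b)) ^ 2 := by
    nlinarith [hτ ▸ hx]
  have h1 := l2norm_sq (A.mulVec xQP - b)
  have h2 := l2norm_sq (A.mulVec x - b)
  unfold l2norm
  exact Real.sqrt_le_sqrt (by rw [← h1, ← h2]; exact hsq)
end

section
/- With the notation of the quadratic-programming reformulation (partition {1,…,n} = A₊ ∪ A₋ ∪ I, s ∈ ℝ^𝒜 the sign vector on 𝒜 = A₊ ∪ A₋, P_rg the orthogonal projection onto the range of Aᵀ, P̄ = (P_rg − Id)∘P_Iᵀ, v̄ = (Id − P_rg)(P_𝒜ᵀ s)): there exists a vector w in the range of Aᵀ with w_i = 1 for i ∈ A₊, w_i = −1 for i ∈ A₋ and |w_i| ≤ 1 for i ∈ I, if and only if the optimal value of the problem min over z ∈ ℝ^I with ‖z‖_∞ ≤ 1 of (1/2)‖P̄ z − v̄‖₂² equals zero. -/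
open Matrix Finset

open Classical in
/-- Zero-filling extension `P_Iᵀ : ℝ^I → ℝ^n` (the adjoint of the coordinate
restriction `P_I : ℝ^n → ℝ^I`). -/
noncomputable def extCoord {n : ℕ} (I : Set (Fin n)) (z : {i : Fin n // i ∈ I} → ℝ) :
    Fin n → ℝ :=
  fun i => if h : i ∈ I then z ⟨i, h⟩ else 0

open Classical in
/-- The zero-filled sign vector `P_𝒜ᵀ s ∈ ℝ^n`, where `s ∈ ℝ^𝒜` equals `1`
on `A₊` and `-1` on `A₋`. -/
noncomputable def extSign {n : ℕ} (Ap Am : Set (Fin n)) : Fin n → ℝ :=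
  fun i => if i ∈ Ap then 1 else if i ∈ Am then -1 else 0

/-- `Prg` is the Euclidean orthogonal projection onto the range of `Aᵀ`:
`Prg v` lies in the range and `v − Prg v` is orthogonal to the range. -/
def IsOrthProjOntoRangeTranspose {k n : ℕ} (A : Matrix (Fin k) (Fin n) ℝ)
    (Prg : (Fin n → ℝ) → (Fin n → ℝ)) : Prop :=
  ∀ v : Fin n → ℝ, (∃ y : Fin k → ℝ, Aᵀ.mulVec y = Prg v) ∧
    ∀ u : Fin n → ℝ, (∃ y : Fin k → ℝ, Aᵀ.mulVec y = u) → (v - Prg v) ⬝ᵥ u = 0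

section Aux

variable {k n : ℕ} {A : Matrix (Fin k) (Fin n) ℝ} {Prg : (Fin n → ℝ) → (Fin n → ℝ)}

lemma prg_unique (hPrg : IsOrthProjOntoRangeTranspose A Prg) (v w : Fin n → ℝ)
    (hw : ∃ y : Fin k → ℝ, Aᵀ.mulVec y = w)
    (horth : ∀ u : Fin n → ℝ, (∃ y : Fin k → ℝ, Aᵀ.mulVec y = u) → (v - w) ⬝ᵥ u = 0) :
    Prg v = w := by
  obtain ⟨y1, hy1⟩ := (hPrg v).1
  obtain ⟨y2, hy2⟩ := hw
  have hd : ∃ y : Fin k → ℝ, Aᵀ.mulVec y = Prg v - w :=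
    ⟨y1 - y2, by rw [Matrix.mulVec_sub, hy1, hy2]⟩
  have h1 := (hPrg v).2 _ hd
  have h2 := horth _ hd
  have key : (Prg v - w) ⬝ᵥ (Prg v - w) = 0 := by
    have hrw : Prg v - w = (v - w) - (v - Prg v) := by abel
    calc (Prg v - w) ⬝ᵥ (Prg v - w)
        = (v - w) ⬝ᵥ (Prg v - w) - (v - Prg v) ⬝ᵥ (Prg v - w) := by
          rw [← sub_dotProduct, ← hrw]
      _ = 0 := by rw [h2, h1, sub_zero]
  exact sub_eq_zero.mp (dotProduct_self_eq_zero.mp key)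

lemma prg_fix (hPrg : IsOrthProjOntoRangeTranspose A Prg) (u : Fin n → ℝ)
    (hu : ∃ y : Fin k → ℝ, Aᵀ.mulVec y = u) : Prg u = u :=
  prg_unique hPrg u u hu (fun u' _ => by simp)

lemma prg_add (hPrg : IsOrthProjOntoRangeTranspose A Prg) (v w : Fin n → ℝ) :
    Prg (v + w) = Prg v + Prg w := by
  apply prg_unique hPrg
  · obtain ⟨y1, hy1⟩ := (hPrg v).1
    obtain ⟨y2, hy2⟩ := (hPrg w).1
    exact ⟨y1 + y2, by rw [Matrix.mulVec_add, hy1, hy2]⟩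
  · intro u hu
    have hrw : v + w - (Prg v + Prg w) = (v - Prg v) + (w - Prg w) := by abel
    rw [hrw, add_dotProduct, (hPrg v).2 _ hu, (hPrg w).2 _ hu, add_zero]

lemma prg_smul (hPrg : IsOrthProjOntoRangeTranspose A Prg) (a : ℝ) (v : Fin n → ℝ) :
    Prg (a • v) = a • Prg v := by
  apply prg_unique hPrg
  · obtain ⟨y1, hy1⟩ := (hPrg v).1
    exact ⟨a • y1, by rw [Matrix.mulVec_smul, hy1]⟩
  · intro u hu
    have hrw : a • v - a • Prg v = a • (v - Prg v) := by rw [smul_sub]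
    rw [hrw, smul_dotProduct, (hPrg v).2 _ hu, smul_zero]

lemma extCoord_add {I : Set (Fin n)} (z z' : {i : Fin n // i ∈ I} → ℝ) :
    extCoord I (z + z') = extCoord I z + extCoord I z' := by
  funext i
  simp only [extCoord, Pi.add_apply]
  split <;> simp

lemma extCoord_smul {I : Set (Fin n)} (a : ℝ) (z : {i : Fin n // i ∈ I} → ℝ) :
    extCoord I (a • z) = a • extCoord I z := by
  funext i
  simp only [extCoord, Pi.smul_apply, smul_eq_mul]
  split <;> simp

end Aux

/-- a dual certificate `w ∈ rg Aᵀ` with the prescribed sign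
pattern exists iff the optimal value of the quadratic program
`min_{‖z‖_∞ ≤ 1} (1/2)‖P̄ z − v̄‖₂²` equals zero. -/
theorem certificate_iff_qp_value_zero {k n : ℕ}
    (A : Matrix (Fin k) (Fin n) ℝ)
    (I Ap Am : Set (Fin n))
    (hIAp : Disjoint I Ap) (hIAm : Disjoint I Am) (hApAm : Disjoint Ap Am)
    (hcover : I ∪ Ap ∪ Am = Set.univ)
    (Prg : (Fin n → ℝ) → (Fin n → ℝ))
    (hPrg : IsOrthProjOntoRangeTranspose A Prg) :
    (∃ w : Fin n → ℝ, (∃ y : Fin k → ℝ, Aᵀ.mulVec y = w) ∧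
        (∀ i ∈ Ap, w i = 1) ∧ (∀ i ∈ Am, w i = -1) ∧ (∀ i ∈ I, |w i| ≤ 1)) ↔
      sInf {c : ℝ | ∃ z : {i : Fin n // i ∈ I} → ℝ, (∀ i, |z i| ≤ 1) ∧
        c = (1 / 2) * (l2norm ((Prg (extCoord I z) - extCoord I z) -
          (extSign Ap Am - Prg (extSign Ap Am)))) ^ 2} = 0 := by
  classical
  set s : Fin n → ℝ := extSign Ap Am with hs
  set c : Fin n → ℝ := s - Prg s with hc
  -- the linear map z ↦ Prg (e z) - e z
  let G : ({i : Fin n // i ∈ I} → ℝ) →ₗ[ℝ] (Fin n → ℝ) :=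
    { toFun := fun z => Prg (extCoord I z) - extCoord I z
      map_add' := fun z z' => by
        simp only [extCoord_add, prg_add hPrg]; abel
      map_smul' := fun a z => by
        simp only [extCoord_smul, prg_smul hPrg, RingHom.id_apply, smul_sub] }
  have hGapp : ∀ z, G z = Prg (extCoord I z) - extCoord I z := fun z => rfl
  -- objective function
  set F : ({i : Fin n // i ∈ I} → ℝ) → ℝ :=
    fun z => (1 / 2) * ∑ i, (G z i - c i) ^ 2 with hF
  have hform : ∀ z : {i : Fin n // i ∈ I} → ℝ,
      (1 / 2) * (l2norm ((Prg (extCoord I z) - extCoord I z) -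
        (extSign Ap Am - Prg (extSign Ap Am)))) ^ 2 = F z := by
    intro z
    have h1 : ∀ i, (Prg (extCoord I z) - extCoord I z -
        (extSign Ap Am - Prg (extSign Ap Am))) i = G z i - c i := fun i => rfl
    simp only [hF, l2norm]
    rw [Real.sq_sqrt (by positivity)]
    exact congrArg _ (Finset.sum_congr rfl (fun i _ => by rw [h1]))
  have hFnonneg : ∀ z, 0 ≤ F z := by intro z; simp only [hF]; positivity
  -- compactness, attained minimum
  set K : Set ({i : Fin n // i ∈ I} → ℝ) := {z | ∀ i, |z i| ≤ 1} with hKdef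
  have hKc : IsCompact K := by
    have : K = Set.pi Set.univ (fun _ : {i : Fin n // i ∈ I} => Set.Icc (-1 : ℝ) 1) := by
      ext z
      simp only [hKdef, Set.mem_setOf_eq, Set.mem_pi, Set.mem_univ, forall_true_left,
        Set.mem_Icc, abs_le, Subtype.forall]
    rw [this]
    exact isCompact_univ_pi (fun _ => isCompact_Icc)
  have hKne : K.Nonempty := ⟨0, fun i => by simp⟩
  have hFcont : Continuous F := by
    apply Continuous.mul continuous_const
    apply continuous_finset_sum
    intro i _
    have hGi : Continuous fun z => G z i :=
      (continuous_apply i).comp G.continuous_of_finiteDimensional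
    exact (hGi.sub continuous_const).pow 2
  obtain ⟨z₀, hz₀K, hz₀min⟩ := hKc.exists_isMinOn hKne hFcont.continuousOn
  set S : Set ℝ := {c : ℝ | ∃ z : {i : Fin n // i ∈ I} → ℝ, (∀ i, |z i| ≤ 1) ∧
        c = (1 / 2) * (l2norm ((Prg (extCoord I z) - extCoord I z) -
          (extSign Ap Am - Prg (extSign Ap Am)))) ^ 2} with hSdef
  have hmemS : ∀ z ∈ K, F z ∈ S := fun z hz => ⟨z, hz, (hform z).symm⟩
  have hSbdd : ∀ b ∈ S, F z₀ ≤ b := by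
    rintro b ⟨z, hz, rfl⟩
    rw [hform z]
    exact hz₀min hz
  have hsInf : sInf S = F z₀ := by
    apply le_antisymm
    · exact csInf_le ⟨F z₀, hSbdd⟩ (hmemS z₀ hz₀K)
    · exact le_csInf ⟨F z₀, hmemS z₀ hz₀K⟩ hSbdd
  rw [hsInf]
  -- membership/sign helper facts
  have hApI : ∀ i ∈ Ap, i ∉ I := fun i hi => Set.disjoint_right.mp hIAp hi
  have hAmI : ∀ i ∈ Am, i ∉ I := fun i hi => Set.disjoint_right.mp hIAm hi
  have hAmAp : ∀ i ∈ Am, i ∉ Ap := fun i hi => Set.disjoint_right.mp hApAm hi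
  constructor
  · rintro ⟨w, hwR, hwAp, hwAm, hwI⟩
    set z : {i : Fin n // i ∈ I} → ℝ := fun i => w i.1 with hz
    have hzK : z ∈ K := fun i => hwI i.1 i.2
    have hsum : extCoord I z + s = w := by
      funext i
      simp only [Pi.add_apply, extCoord, hs, extSign]
      by_cases hiI : i ∈ I
      · have h1 : i ∉ Ap := Set.disjoint_left.mp hIAp hiI
        have h2 : i ∉ Am := Set.disjoint_left.mp hIAm hiI
        simp [hiI, h1, h2, hz]
      · have : i ∈ Ap ∪ Am := by
          have := Set.mem_univ i
          rw [← hcover] at this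
          rcases this with h | h
          · rcases h with h | h
            · exact absurd h hiI
            · exact Or.inl h
          · exact Or.inr h
        rcases this with h | h
        · simp [hiI, h, hwAp i h]
        · simp [hiI, hAmAp i h, h, hwAm i h]
    have hfix : Prg (extCoord I z + s) = extCoord I z + s := by
      rw [hsum]; exact prg_fix hPrg w hwR
    have hGz : G z = c := by
      rw [prg_add hPrg] at hfix
      rw [hGapp, hc]
      have := hfix
      funext i
      have := congrFun hfix i
      simp only [Pi.add_apply, Pi.sub_apply] at this ⊢
      linarith
    have hFz : F z = 0 := by
      simp [hF, hGz]
    have h1 : F z₀ ≤ 0 := hFz ▸ hz₀min hzK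
    linarith [hFnonneg z₀]
  · intro h0
    have hsum0 : ∑ i, (G z₀ i - c i) ^ 2 = 0 := by
      simp only [hF] at h0; linarith
    have hGz : ∀ i, G z₀ i = c i := by
      intro i
      have := (Finset.sum_eq_zero_iff_of_nonneg (fun i _ => sq_nonneg _)).mp hsum0 i
        (Finset.mem_univ i)
      have := sq_eq_zero_iff.mp this
      linarith
    refine ⟨extCoord I z₀ + s, ?_, ?_, ?_, ?_⟩
    · have hfix : Prg (extCoord I z₀ + s) = extCoord I z₀ + s := by
        rw [prg_add hPrg]
        funext i
        have := hGz i
        rw [hGapp] at this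
        simp only [Pi.sub_apply, hc] at this
        simp only [Pi.add_apply]
        linarith
      obtain ⟨y, hy⟩ := (hPrg (extCoord I z₀ + s)).1
      exact ⟨y, by rw [hy, hfix]⟩
    · intro i hi
      simp only [Pi.add_apply, extCoord, hs, extSign]
      simp [hApI i hi, hi]
    · intro i hi
      simp only [Pi.add_apply, extCoord, hs, extSign]
      simp [hAmI i hi, hAmAp i hi, hi]
    · intro i hi
      have h1 : i ∉ Ap := Set.disjoint_left.mp hIAp hi
      have h2 : i ∉ Am := Set.disjoint_left.mp hIAm hi
      simp only [Pi.add_apply, extCoord, hs, extSign]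
      rw [dif_pos hi, if_neg h1, if_neg h2, add_zero]
      exact hz₀K ⟨i, hi⟩
end

section
/- Let n ≥ 2 and 2 ≤ K ≤ n, and let A_K be the n×n real matrix whose j-th column a_j has entries (a_j)_i = 1 for j ≤ i ≤ min(j + K − 1, n) and (a_j)_i = 0 otherwise (a lower-banded matrix of ones with K bands, truncated at the bottom). Then the coherence of A_K, defined as μ = max over i ≠ j of ⟨a_i, a_j⟩/(‖a_i‖₂ ‖a_j‖₂), equals √((K − 1)/K). -/
open Matrix Finset

lemma inner_col (n K : ℕ) (hK : 2 ≤ K) (i j : ℕ) :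
    ∑ t : Fin n, (if i ≤ (t:ℕ) ∧ (t:ℕ) ≤ i + K - 1 then (1:ℝ) else 0) *
      (if j ≤ (t:ℕ) ∧ (t:ℕ) ≤ j + K - 1 then (1:ℝ) else 0)
    = ((min (min i j + K) n - max i j : ℕ) : ℝ) := by
  have h1 : ∀ t : Fin n,
      (if i ≤ (t:ℕ) ∧ (t:ℕ) ≤ i + K - 1 then (1:ℝ) else 0) *
      (if j ≤ (t:ℕ) ∧ (t:ℕ) ≤ j + K - 1 then (1:ℝ) else 0)
      = if (t:ℕ) ∈ Finset.Ico (max i j) (min (min i j + K) n) then 1 else 0 := by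
    intro t
    have ht := t.isLt
    rw [ite_zero_mul_ite_zero]
    refine if_congr ?_ (one_mul 1) rfl
    simp only [Finset.mem_Ico]
    omega
  rw [Finset.sum_congr rfl (fun t _ => h1 t)]
  rw [Fin.sum_univ_eq_sum_range (fun t => if t ∈ Finset.Ico (max i j) (min (min i j + K) n) then (1:ℝ) else 0)]
  rw [Finset.sum_ite_mem]
  have h2 : Finset.range n ∩ Finset.Ico (max i j) (min (min i j + K) n)
      = Finset.Ico (max i j) (min (min i j + K) n) := by
    ext t; simp only [Finset.mem_inter, Finset.mem_range, Finset.mem_Ico]; omega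
  rw [h2]
  simp [Nat.card_Ico]

lemma keyineq' (n K i j : ℕ) (hK : 2 ≤ K) (hij : i < j) (hj : j < n) :
    K * (min (i + K) n - j)^2 ≤ (K-1) * ((min (i+K) n - i) * (min (j+K) n - j)) := by
  set o := min (i+K) n - j with ho
  set mi := min (i+K) n - i with hmi
  set mj := min (j+K) n - j with hmj
  have h1 : o ≤ mj := by omega
  have h2 : mi ≤ K := by omega
  have h3 : (o + (j - i) = mi ∧ 1 ≤ j - i) ∨ o = 0 := by omega
  rcases h3 with ⟨h3, h4⟩ | h3
  · zify [show 1 ≤ K by omega]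
    set d := j - i
    have h5 : (K:ℤ) * o ≤ (K-1) * mi := by nlinarith [h2, h3, h4]
    nlinarith [mul_le_mul_of_nonneg_right h5 (Int.natCast_nonneg o),
      mul_le_mul_of_nonneg_left (show (o:ℤ) ≤ mj by exact_mod_cast h1)
        (by nlinarith [Int.natCast_nonneg mi, show (1:ℤ) ≤ (K:ℤ) by exact_mod_cast Nat.one_le_iff_ne_zero.mpr (by omega)] : (0:ℤ) ≤ ((K:ℤ)-1)*(mi:ℤ))]
  · simp [h3]

lemma keyineq (n K i j : ℕ) (hK : 2 ≤ K) (hij : i ≠ j) (hi : i < n) (hj : j < n) :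
    K * (min (min i j + K) n - max i j)^2
      ≤ (K-1) * ((min (i+K) n - i) * (min (j+K) n - j)) := by
  rcases lt_or_gt_of_ne hij with h | h
  · rw [min_eq_left h.le, max_eq_right h.le]
    exact keyineq' n K i j hK h hj
  · rw [min_eq_right h.le, max_eq_left h.le, mul_comm (min (i+K) n - i)]
    exact keyineq' n K j i hK h hi

lemma realbound (K o mi mj : ℕ) (hK : 2 ≤ K) (hmi : 1 ≤ mi) (hmj : 1 ≤ mj)
    (h : K * o^2 ≤ (K-1) * (mi * mj)) :
    (o:ℝ) / (Real.sqrt mi * Real.sqrt mj) ≤ Real.sqrt (((K:ℝ)-1)/K) := by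
  have hKpos : (0:ℝ) < K := by positivity
  have hmipos : (0:ℝ) < mi := by exact_mod_cast hmi
  have hmjpos : (0:ℝ) < mj := by exact_mod_cast hmj
  have hsq : Real.sqrt mi * Real.sqrt mj = Real.sqrt (mi*mj) := by
    rw [Real.sqrt_mul (by positivity)]
  rw [hsq, div_le_iff₀ (by positivity)]
  have hR : (K:ℝ) * (o:ℝ)^2 ≤ ((K:ℝ)-1) * ((mi:ℝ)*(mj:ℝ)) := by
    have := h
    zify [show 1 ≤ K by omega] at this
    exact_mod_cast this
  have hK1 : (1:ℝ) ≤ (K:ℝ) := by exact_mod_cast (by omega : 1 ≤ K)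
  rw [← Real.sqrt_mul (div_nonneg (by linarith) hKpos.le) ((mi:ℝ)*(mj:ℝ))]
  rw [show ((o:ℝ)) = Real.sqrt ((o:ℝ)^2) by rw [Real.sqrt_sq (by positivity)]]
  apply Real.sqrt_le_sqrt
  rw [div_mul_eq_mul_div, le_div_iff₀ hKpos]
  nlinarith [hR]

lemma membereq (K : ℕ) (hK : 2 ≤ K) :
    ((K:ℝ)-1) / (Real.sqrt K * Real.sqrt ((K:ℝ)-1)) = Real.sqrt (((K:ℝ)-1)/K) := by
  have h1 : (0:ℝ) < (K:ℝ) - 1 := by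
    have : (2:ℝ) ≤ K := by exact_mod_cast hK
    linarith
  have hKpos : (0:ℝ) < K := by positivity
  rw [Real.sqrt_div h1.le]
  rw [eq_div_iff (by positivity)]
  field_simp
  nlinarith [Real.sq_sqrt h1.le, Real.sq_sqrt hKpos.le, Real.sqrt_nonneg ((K:ℝ)-1), Real.sqrt_nonneg (K:ℝ), Real.sqrt_pos.mpr h1, Real.sqrt_pos.mpr hKpos]

/-- the coherence of the lower-banded matrix of ones `A_K`
(whose `j`-th column has ones exactly in rows `j, …, min(j + K − 1, n)`,
in 1-based indexing) equals `√((K − 1)/K)`.  Here columns are `a j` with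
`(a j) i = 1` iff `j ≤ i ≤ j + K − 1` in 0-based `Fin n` indexing (the
truncation at the bottom row is automatic since `i < n`). -/
theorem coherence_banded_ones {n K : ℕ} (hn : 2 ≤ n) (hK : 2 ≤ K) (hKn : K ≤ n)
    (a : Fin n → Fin n → ℝ)
    (ha : ∀ j i : Fin n,
      a j i = if (j : ℕ) ≤ (i : ℕ) ∧ (i : ℕ) ≤ (j : ℕ) + K - 1 then 1 else 0) :
    IsGreatest
      {μ : ℝ | ∃ i j : Fin n, i ≠ j ∧
        μ = (∑ t, a i t * a j t) / (l2norm (a i) * l2norm (a j))}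
      (Real.sqrt (((K : ℝ) - 1) / K)) := by
  have key : ∀ i j : Fin n, (∑ t, a i t * a j t)
      = ((min (min (i:ℕ) (j:ℕ) + K) n - max (i:ℕ) (j:ℕ) : ℕ) : ℝ) := by
    intro i j
    simp only [ha]
    exact inner_col n K hK i j
  have hnorm : ∀ j : Fin n, l2norm (a j) = Real.sqrt ((min ((j:ℕ)+K) n - (j:ℕ) : ℕ)) := by
    intro j
    unfold l2norm
    congr 1
    calc ∑ t, (a j t)^2 = ∑ t, a j t * a j t := by
          refine Finset.sum_congr rfl fun t _ => ?_; ring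
      _ = _ := by rw [key j j]; simp
  constructor
  · refine ⟨⟨n-K, by omega⟩, ⟨n-K+1, by omega⟩, Fin.ne_of_val_ne (show n-K ≠ n-K+1 by omega), ?_⟩
    rw [key, hnorm, hnorm]
    simp only [Fin.val_mk]
    have e1 : min (min (n-K) (n-K+1) + K) n - max (n-K) (n-K+1) = K - 1 := by omega
    have e2 : min ((n-K)+K) n - (n-K) = K := by omega
    have e3 : min ((n-K+1)+K) n - (n-K+1) = K - 1 := by omega
    rw [e1, e2, e3]
    rw [show ((K-1 : ℕ):ℝ) = (K:ℝ) - 1 by push_cast [Nat.cast_sub (by omega : 1 ≤ K)]; ring]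
    exact (membereq K hK).symm
  · rintro μ ⟨i, j, hne, rfl⟩
    rw [key, hnorm, hnorm]
    exact realbound K _ _ _ hK (by have := i.isLt; omega) (by have := j.isLt; omega)
      (keyineq n K i j hK (fun h => hne (Fin.ext h)) i.isLt j.isLt)
end

section
/- Let A be a real k×n matrix and let the index set {1,…,n} be partitioned into sets I, A₊, A₋. Combining the construction steps: suppose z ∈ ℝ^I satisfies ‖z‖_∞ ≤ 1 and P̄ z = v̄ (with P̄ = (P_rg − Id)∘P_Iᵀ, v̄ = (Id − P_rg)(P_𝒜ᵀ s), s the ±1 sign vector on 𝒜 = A₊ ∪ A₋, and P_rg the orthogonal projection onto the range of Aᵀ). Set w = P_𝒜ᵀ s + P_Iᵀ z, let y ∈ ℝ^k solve Aᵀy = w (such y exists), choose any λ > 0 and any x* ∈ ℝ^n with x*_i > 0 on A₊, x*_i < 0 on A₋, x*_i = 0 on I, and set b = λy + Ax*. Then x* is a minimizer of x ↦ (1/2)‖Ax − b‖₂² + λ‖x‖₁ over ℝ^n. -/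
open Matrix Finset

/-- combining the construction steps. If `z ∈ ℝ^I` satisfies
`‖z‖_∞ ≤ 1` and `P̄ z = v̄`, then with `w = P_𝒜ᵀ s + P_Iᵀ z` there exists `y`
with `Aᵀ y = w`, and for any such `y`, any `λ > 0` and any sign-compliant
`x*`, setting `b = λ y + A x*` makes `x*` a minimizer of the (QP_λ)
objective. -/
theorem full_construction_gives_minimizer {k n : ℕ}
    (A : Matrix (Fin k) (Fin n) ℝ)
    (I Ap Am : Set (Fin n))
    (hIAp : Disjoint I Ap) (hIAm : Disjoint I Am) (hApAm : Disjoint Ap Am)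
    (hcover : I ∪ Ap ∪ Am = Set.univ)
    (Prg : (Fin n → ℝ) → (Fin n → ℝ))
    (hPrg : IsOrthProjOntoRangeTranspose A Prg)
    (z : {i : Fin n // i ∈ I} → ℝ)
    (hz : ∀ i, |z i| ≤ 1)
    (heq : Prg (extCoord I z) - extCoord I z =
      extSign Ap Am - Prg (extSign Ap Am))
    (w : Fin n → ℝ) (hw : w = extSign Ap Am + extCoord I z) :
    (∃ y : Fin k → ℝ, Aᵀ.mulVec y = w) ∧
      ∀ y : Fin k → ℝ, Aᵀ.mulVec y = w →
        ∀ lam : ℝ, 0 < lam →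
          ∀ xs : Fin n → ℝ,
            (∀ i ∈ Ap, 0 < xs i) → (∀ i ∈ Am, xs i < 0) → (∀ i ∈ I, xs i = 0) →
              ∀ b : Fin k → ℝ, b = lam • y + A.mulVec xs →
                ∀ x : Fin n → ℝ, qpObj A b lam xs ≤ qpObj A b lam x := by
  classical
  -- basic facts about w
  have hwAp : ∀ i ∈ Ap, w i = 1 := by
    intro i hi
    have hiI : i ∉ I := Set.disjoint_right.mp hIAp hi
    simp [hw, extSign, extCoord, hi, hiI]
  have hwAm : ∀ i ∈ Am, w i = -1 := by
    intro i hi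
    have hiI : i ∉ I := Set.disjoint_right.mp hIAm hi
    have hiAp : i ∉ Ap := Set.disjoint_right.mp hApAm hi
    simp [hw, extSign, extCoord, hi, hiI, hiAp]
  have hwI : ∀ (i) (h : i ∈ I), w i = z ⟨i, h⟩ := by
    intro i hi
    have hiAp : i ∉ Ap := Set.disjoint_left.mp hIAp hi
    have hiAm : i ∉ Am := Set.disjoint_left.mp hIAm hi
    simp [hw, extSign, extCoord, hi, hiAp, hiAm]
  have htrich : ∀ i : Fin n, i ∈ I ∨ i ∈ Ap ∨ i ∈ Am := by
    intro i
    have : i ∈ I ∪ Ap ∪ Am := by rw [hcover]; trivial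
    rcases this with (h | h) | h
    · exact Or.inl h
    · exact Or.inr (Or.inl h)
    · exact Or.inr (Or.inr h)
  have hwbound : ∀ i, |w i| ≤ 1 := by
    intro i
    rcases htrich i with h | h | h
    · rw [hwI i h]; exact hz _
    · rw [hwAp i h]; norm_num
    · rw [hwAm i h]; norm_num
  -- existence of y
  obtain ⟨hy1, -⟩ := hPrg (extSign Ap Am)
  obtain ⟨hy2, -⟩ := hPrg (extCoord I z)
  obtain ⟨y1, hy1⟩ := hy1
  obtain ⟨y2, hy2⟩ := hy2
  have hwP : w = Prg (extSign Ap Am) + Prg (extCoord I z) := by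
    funext i
    have := congrFun heq i
    simp only [Pi.sub_apply] at this
    simp only [hw, Pi.add_apply]
    linarith
  refine ⟨⟨y1 + y2, ?_⟩, ?_⟩
  · rw [Matrix.mulVec_add, hy1, hy2, hwP]
  intro y hy lam hlam xs hAp hAm hI b hb x
  -- squared norm expansion
  have hsq : ∀ v : Fin k → ℝ, l2norm v ^ 2 = ∑ i, (v i) ^ 2 := by
    intro v
    exact Real.sq_sqrt (Finset.sum_nonneg fun i _ => sq_nonneg _)
  set d : Fin n → ℝ := x - xs with hd
  have hbs : A.mulVec xs - b = -(lam • y) := by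
    rw [hb]; abel
  have hbx : A.mulVec x - b = A.mulVec d - lam • y := by
    have : A.mulVec d = A.mulVec x - A.mulVec xs := by
      rw [hd, Matrix.mulVec_sub]
    rw [this, hb]; abel
  -- dot product identity
  have hdot : ∑ i, A.mulVec d i * y i = w ⬝ᵥ d := by
    have h1 : y ⬝ᵥ A.mulVec d = Aᵀ.mulVec y ⬝ᵥ d := by
      rw [Matrix.dotProduct_mulVec, ← Matrix.vecMul_transpose, Matrix.transpose_transpose]
    rw [← hy, ← h1]
    simp [dotProduct, mul_comm]
  have hexp : ∑ i, ((A.mulVec x - b) i) ^ 2 =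
      ∑ i, (A.mulVec d i) ^ 2 - 2 * lam * (w ⬝ᵥ d) + lam ^ 2 * ∑ i, (y i) ^ 2 := by
    rw [hbx, ← hdot, Finset.mul_sum, Finset.mul_sum, ← Finset.sum_sub_distrib,
      ← Finset.sum_add_distrib]
    apply Finset.sum_congr rfl
    intro i _
    simp only [Pi.sub_apply, Pi.smul_apply, smul_eq_mul]
    ring
  have hexps : ∑ i, ((A.mulVec xs - b) i) ^ 2 = lam ^ 2 * ∑ i, (y i) ^ 2 := by
    rw [hbs, Finset.mul_sum]
    apply Finset.sum_congr rfl
    intro i _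
    simp only [Pi.neg_apply, Pi.smul_apply, smul_eq_mul]
    ring
  -- l1 facts
  have hwxs : w ⬝ᵥ xs = l1norm xs := by
    unfold l1norm dotProduct
    apply Finset.sum_congr rfl
    intro i _
    rcases htrich i with h | h | h
    · rw [hI i h]; simp
    · rw [hwAp i h, abs_of_pos (hAp i h)]; ring
    · rw [hwAm i h, abs_of_neg (hAm i h)]; ring
  have hwx : w ⬝ᵥ x ≤ l1norm x := by
    unfold l1norm dotProduct
    apply Finset.sum_le_sum
    intro i _
    calc w i * x i ≤ |w i * x i| := le_abs_self _
      _ = |w i| * |x i| := abs_mul _ _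
      _ ≤ 1 * |x i| := by
          exact mul_le_mul_of_nonneg_right (hwbound i) (abs_nonneg _)
      _ = |x i| := one_mul _
  have hwd : w ⬝ᵥ d = w ⬝ᵥ x - w ⬝ᵥ xs := by
    rw [hd, dotProduct_sub]
  have hAd : 0 ≤ ∑ i, (A.mulVec d i) ^ 2 :=
    Finset.sum_nonneg fun i _ => sq_nonneg _
  unfold qpObj
  rw [hsq, hsq, hexp, hexps]
  unfold l1norm at *
  nlinarith [mul_le_mul_of_nonneg_left hwx (le_of_lt hlam)]
end
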